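/- arXiv:1503.02038 — 2 statements merged into one kernel-verified Lean document; each statement's English description precedes it below -/
import Mathlib

section
/- Let I ⊆ R = ℂ[x_1,…,x_N] be an ideal with I = IR_0 ∩ R (i.e., I is contracted from the local ring of the origin). Then: (a) D_0[I] is spanned by homogeneous functionals (functionals whose support lies in exponents of a single total degree) if and only if I is generated by homogeneous polynomials; (b) D_0[I] is spanned by a set of monomial functionals ∂^α if and only if I is a monomial ideal. -/
open MvPolynomial

noncomputable section

/-- The polynomial ring `R = ℂ[x_1,…,x_N]`, with variables indexed by `Fin N`. -/
abbrev PolyR (N : ℕ) := MvPolynomial (Fin N) ℂ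

/-- A dual functional `q = Σ_α c_α ∂^α` is encoded by its coefficient vector, i.e.
by an element of `MvPolynomial (Fin N) ℂ` (which is exactly the space of finitely
supported functions `ℕ^N →₀ ℂ`).  Its application to a polynomial `f` is
`q(f) = Σ_α c_α · (coefficient of x^α in f)`. -/
def dapply {N : ℕ} (q f : PolyR N) : ℂ := ∑ α ∈ f.support, q.coeff α * f.coeff α

/-- The Macaulay dual space `D_0[I]` of an ideal `I`, as a `ℂ`-subspace of `D_0`. -/
def dualSpace {N : ℕ} (I : Ideal (PolyR N)) : Submodule ℂ (PolyR N) where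
  carrier := {q | ∀ f ∈ I, dapply q f = 0}
  zero_mem' := by intro f _; simp [dapply]
  add_mem' := by
    intro a b ha hb f hf
    have h : dapply (a + b) f = dapply a f + dapply b f := by
      simp [dapply, MvPolynomial.coeff_add, add_mul, Finset.sum_add_distrib]
    rw [h, ha f hf, hb f hf, add_zero]
  smul_mem' := by
    intro c q hq f hf
    have h : dapply (c • q) f = c * dapply q f := by
      simp [dapply, MvPolynomial.coeff_smul, Finset.mul_sum, mul_assoc]
    rw [h, hq f hf, mul_zero]

/-- The subspace of dual functionals all of whose exponents satisfy `P`. -/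
def expSupported {N : ℕ} (P : (Fin N →₀ ℕ) → Prop) : Submodule ℂ (PolyR N) where
  carrier := {q | ∀ α ∈ q.support, P α}
  zero_mem' := by simp
  add_mem' := by
    intro a b ha hb α hα
    rcases Finset.mem_union.mp (MvPolynomial.support_add hα) with h | h
    · exact ha α h
    · exact hb α h
  smul_mem' := by
    intro c q hq α hα
    exact hq α (MvPolynomial.support_smul hα)

/-- The truncated dual space `D_0^k[I]`: functionals in `D_0[I]` of order at most `k`
(in particular `0` belongs to it). -/
def truncDual {N : ℕ} (I : Ideal (PolyR N)) (k : ℕ) : Submodule ℂ (PolyR N) :=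
  dualSpace I ⊓ expSupported (fun α => ∑ i, α i ≤ k)

/-- The eliminating truncated dual space `E_0^d[I, A]`, where the set of variables `A`
is given by a finite set of indices: functionals in `D_0[I]` with `ord_A ≤ d`. -/
def elimDual {N : ℕ} (I : Ideal (PolyR N)) (A : Finset (Fin N)) (d : ℕ) :
    Submodule ℂ (PolyR N) :=
  dualSpace I ⊓ expSupported (fun α => ∑ i ∈ A, α i ≤ d)

open scoped Classical in
/-- The action `g · q` of the polynomial ring on dual functionals, determined by
`(g·q)(f) = q(g·f)`; concretely `g · ∂^α = Σ_{γ ≤ α} g_γ ∂^{α-γ}`. -/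
def dmul {N : ℕ} (g q : PolyR N) : PolyR N :=
  ∑ γ ∈ g.support, ∑ α ∈ q.support,
    if γ ≤ α then (MvPolynomial.monomial (α - γ)) (g.coeff γ * q.coeff α) else 0

/-- The maximal ideal `m = ⟨x_1,…,x_N⟩` of the origin. -/
def mIdeal (N : ℕ) : Ideal (PolyR N) := Ideal.span (Set.range MvPolynomial.X)

/-- The multiplicative set of polynomials not vanishing at the origin. -/
def atOrigin (N : ℕ) : Submonoid (PolyR N) where
  carrier := {g | MvPolynomial.constantCoeff g ≠ 0}
  one_mem' := by simp
  mul_mem' := by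
    intro a b ha hb
    simp only [Set.mem_setOf_eq, map_mul]
    exact mul_ne_zero ha hb

/-- The local ring `R_0` of the origin: the localization of `R` at the maximal ideal
of the origin. -/
abbrev LocR (N : ℕ) := Localization (atOrigin N)

/-- The extension `I·R_0` of an ideal `I ⊆ R` to the local ring of the origin. -/
def extIdeal {N : ℕ} (I : Ideal (PolyR N)) : Ideal (LocR N) :=
  Ideal.map (algebraMap (PolyR N) (LocR N)) I

/-- The contraction `I·R_0 ∩ R` of the extension of `I` back to `R`. -/
def contExt {N : ℕ} (I : Ideal (PolyR N)) : Ideal (PolyR N) :=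
  Ideal.comap (algebraMap (PolyR N) (LocR N)) (extIdeal I)

/-- The local Hilbert function
`H_I(k) = dim_ℂ R/(I + m^{k+1}) − dim_ℂ R/(I + m^k)`
(note that for `k = 0` the subtrahend vanishes since `m^0 = R`). -/
def hilb {N : ℕ} (I : Ideal (PolyR N)) (k : ℕ) : ℕ :=
  Module.finrank ℂ (PolyR N ⧸ (I + mIdeal N ^ (k + 1)))
    - Module.finrank ℂ (PolyR N ⧸ (I + mIdeal N ^ k))

/-!
Since `I` is contracted from the Noetherian local ring `R_0`, Krull's intersection theorem there
gives `I = ⋂ₖ (I + m^k)`. A polynomial outside `I + m^k` is separated from it by a linear form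
vanishing on `m^k`, and such a form is a finite sum `Σ c_α ∂^α`; hence `I` is exactly the set of
polynomials annihilated by `D_0[I]`.

The pairing `q(f) = Σ q_α f_α` commutes with taking homogeneous components, and `∂^α(f) = f_α`.
So closure under homogeneous components (resp. under the monomials of the support) passes from `I`
to `D_0[I]` and, by the annihilator description, back. For an ideal as for a subspace these
closure properties say exactly that it is generated by homogeneous (resp. monomial) elements.
-/

namespace MvPolynomial

variable {σ R : Type*} [CommSemiring R]

theorem exists_isHomogeneous_span_eq_iff (I : Ideal (MvPolynomial σ R)) :
    (∃ G : Set (MvPolynomial σ R), (∀ g ∈ G, ∃ k, g.IsHomogeneous k) ∧ Ideal.span G = I) ↔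
      ∀ f ∈ I, ∀ d, homogeneousComponent d f ∈ I := by
  classical
  constructor
  · rintro ⟨G, hG, rfl⟩ f hf d
    let := MvPolynomial.gradedAlgebra (σ := σ) (R := R)
    exact homogeneousComponent_mem_of_mem (Ideal.homogeneous_span _ G hG) hf d
  · intro hI
    refine ⟨{g | g ∈ I ∧ ∃ k, g.IsHomogeneous k}, fun g hg => hg.2,
      le_antisymm (Ideal.span_le.2 fun g hg => hg.1) fun f hf => ?_⟩
    rw [← sum_homogeneousComponent f]
    exact Ideal.sum_mem _ fun d _ =>
      Ideal.subset_span ⟨hI f hf d, d, homogeneousComponent_isHomogeneous d f⟩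

theorem exists_isHomogeneous_submodule_span_eq_iff (V : Submodule R (MvPolynomial σ R)) :
    (∃ B ⊆ (V : Set (MvPolynomial σ R)), (∀ q ∈ B, ∃ k, q.IsHomogeneous k) ∧
        Submodule.span R B = V) ↔
      ∀ q ∈ V, ∀ d, homogeneousComponent d q ∈ V := by
  constructor
  · rintro ⟨B, -, hB, rfl⟩ q hq d
    have : Submodule.span R B ≤ (Submodule.span R B).comap (homogeneousComponent d) := by
      refine Submodule.span_le.2 fun b hb => ?_
      obtain ⟨k, hk⟩ := hB b hb
      rw [SetLike.mem_coe, Submodule.mem_comap, homogeneousComponent_of_mem hk]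
      split_ifs
      exacts [Submodule.subset_span hb, Submodule.zero_mem _]
    exact this hq
  · intro hV
    refine ⟨{q | q ∈ V ∧ ∃ k, q.IsHomogeneous k}, fun q hq => hq.1, fun q hq => hq.2,
      le_antisymm (Submodule.span_le.2 fun q hq => hq.1) fun q hq => ?_⟩
    rw [← sum_homogeneousComponent q]
    exact Submodule.sum_mem _ fun d _ =>
      Submodule.subset_span ⟨hV q hq d, d, homogeneousComponent_isHomogeneous d q⟩

theorem exists_monomial_span_eq_iff (I : Ideal (MvPolynomial σ R)) :
    (∃ G : Set (MvPolynomial σ R), (∀ g ∈ G, ∃ α, g = monomial α 1) ∧ Ideal.span G = I) ↔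
      ∀ f ∈ I, ∀ α ∈ f.support, monomial α 1 ∈ I := by
  constructor
  · rintro ⟨G, hG, rfl⟩ f hf α hα
    have hG' : G = (fun β => monomial β (1 : R)) '' {β | monomial β 1 ∈ G} := by
      ext g
      refine ⟨fun hg => ?_, fun ⟨β, hβ, hg⟩ => hg ▸ hβ⟩
      obtain ⟨β, rfl⟩ := hG g hg
      exact ⟨β, hg, rfl⟩
    rw [hG', mem_ideal_span_monomial_image] at hf ⊢
    intro β hβ
    rw [Finset.mem_singleton.1 (support_monomial_subset hβ)]
    exact hf α hα
  · intro hI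
    refine ⟨{g | g ∈ I ∧ ∃ α, g = monomial α 1}, fun g hg => hg.2,
      le_antisymm (Ideal.span_le.2 fun g hg => hg.1) fun f hf => ?_⟩
    rw [← support_sum_monomial_coeff f]
    refine Ideal.sum_mem _ fun α hα => ?_
    rw [← mul_one (f.coeff α), ← C_mul_monomial]
    exact Ideal.mul_mem_left _ _ (Ideal.subset_span ⟨hI f hf α hα, α, rfl⟩)

theorem exists_monomial_submodule_span_eq_iff (V : Submodule R (MvPolynomial σ R)) :
    (∃ A : Set (σ →₀ ℕ), Submodule.span R ((fun α => monomial α (1 : R)) '' A) = V) ↔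
      ∀ q ∈ V, ∀ α ∈ q.support, monomial α 1 ∈ V := by
  constructor
  · rintro ⟨A, rfl⟩ q hq α hα
    rw [← restrictSupport_eq_span] at hq ⊢
    exact (monomial_mem_restrictSupport R).2 (Or.inl (hq hα))
  · intro hV
    refine ⟨{α | monomial α 1 ∈ V},
      le_antisymm (Submodule.span_le.2 (Set.image_subset_iff.2 fun α hα => hα)) fun q hq => ?_⟩
    rw [← restrictSupport_eq_span]
    exact fun α hα => hV q hq α hα

end MvPolynomial

theorem Ideal.mem_of_forall_mem_sup_pow {A : Type*} [CommRing A] [IsNoetherianRing A]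
    [IsLocalRing A] {J K : Ideal A} (hK : K ≠ ⊤) {x : A} (hx : ∀ k : ℕ, x ∈ J ⊔ K ^ k) :
    x ∈ J := by
  rw [← Ideal.Quotient.eq_zero_iff_mem, ← Submodule.mem_bot A,
    ← K.iInf_pow_smul_eq_bot_of_isLocalRing (M := A ⧸ J) hK, Submodule.mem_iInf]
  intro k
  obtain ⟨j, hj, y, hy, rfl⟩ := Submodule.mem_sup.1 (hx k)
  rw [map_add, Ideal.Quotient.eq_zero_iff_mem.2 hj, zero_add]
  simpa [Algebra.smul_def] using
    Submodule.smul_mem_smul hy (Submodule.mem_top (x := Ideal.Quotient.mk J 1))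

section Pairing

variable {N : ℕ}

theorem dapply_eq_sum_of_support_subset (q : PolyR N) {f : PolyR N}
    {s : Finset (Fin N →₀ ℕ)} (hs : f.support ⊆ s) :
    dapply q f = ∑ α ∈ s, q.coeff α * f.coeff α :=
  Finset.sum_subset hs fun α _ hα => by rw [notMem_support_iff.1 hα, mul_zero]

theorem dapply_monomial_left (α : Fin N →₀ ℕ) (c : ℂ) (f : PolyR N) :
    dapply (monomial α c) f = c * f.coeff α := by
  classical
  rw [dapply_eq_sum_of_support_subset _ (Finset.subset_insert α f.support)]
  simp [coeff_monomial, ite_mul]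

theorem dapply_monomial_right (q : PolyR N) (α : Fin N →₀ ℕ) (c : ℂ) :
    dapply q (monomial α c) = q.coeff α * c := by
  classical
  rw [dapply_eq_sum_of_support_subset _ support_monomial_subset]
  simp

theorem dapply_homogeneousComponent_left (d : ℕ) (q f : PolyR N) :
    dapply (homogeneousComponent d q) f = dapply q (homogeneousComponent d f) := by
  rw [dapply, dapply_eq_sum_of_support_subset _ (support_homogeneousComponent d f ▸
    Finset.filter_subset _ _)]
  refine Finset.sum_congr rfl fun β _ => ?_
  simp only [coeff_homogeneousComponent]
  split_ifs <;> simp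

end Pairing

section LocalRing

variable {N : ℕ}

theorem mem_mIdeal_iff {f : PolyR N} : f ∈ mIdeal N ↔ constantCoeff f = 0 := by
  rw [← pow_one (mIdeal N), mIdeal, mem_pow_idealOfVars_iff', constantCoeff_eq]
  simp [Finsupp.degree_eq_zero_iff]

instance mIdeal.isPrime : (mIdeal N).IsPrime := by
  have : mIdeal N = RingHom.ker (constantCoeff (σ := Fin N) (R := ℂ)) :=
    Ideal.ext fun f => mem_mIdeal_iff
  exact this ▸ RingHom.ker_isPrime _

theorem atOrigin_eq_primeCompl : atOrigin N = (mIdeal N).primeCompl :=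
  Submonoid.ext fun _ => mem_mIdeal_iff.not.symm

instance : IsLocalization.AtPrime (LocR N) (mIdeal N) := by
  rw [IsLocalization.AtPrime, ← atOrigin_eq_primeCompl]
  exact Localization.isLocalization

instance : IsLocalRing (LocR N) := IsLocalization.AtPrime.isLocalRing _ (mIdeal N)

instance : IsNoetherianRing (LocR N) :=
  IsLocalization.isNoetherianRing (atOrigin N) _ inferInstance

theorem mem_of_forall_mem_add_mpow {I : Ideal (PolyR N)} (hI : contExt I = I) {f : PolyR N}
    (hf : ∀ k, f ∈ I + mIdeal N ^ k) : f ∈ I := by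
  rw [← hI, contExt, Ideal.mem_comap]
  refine Ideal.mem_of_forall_mem_sup_pow
    (IsLocalization.AtPrime.isMaximal_map (mIdeal N) (LocR N)).ne_top fun k => ?_
  rw [extIdeal, ← Ideal.map_pow, ← Ideal.map_sup]
  exact Ideal.mem_map_of_mem _ (hf k)

end LocalRing

section Duality

variable {N : ℕ}

theorem exists_dapply_eq_of_vanishes_on_mpow (Φ : PolyR N →ₗ[ℂ] ℂ) {k : ℕ}
    (hΦ : ∀ f ∈ mIdeal N ^ k, Φ f = 0) : ∃ q : PolyR N, ∀ f, dapply q f = Φ f := by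
  classical
  let q : PolyR N := ∑ α ∈ (Finsupp.finite_of_degree_lt k).toFinset,
    monomial α (Φ (monomial α 1))
  have hq : ∀ β, q.coeff β = Φ (monomial β 1) := by
    intro β
    simp only [q, coeff_sum, coeff_monomial, Finset.sum_ite_eq', Set.Finite.mem_toFinset,
      Set.mem_ofPred_eq, ite_eq_left_iff, not_lt]
    exact fun hβ => (hΦ _ ((monomial_mem_pow_idealOfVars_iff k β one_ne_zero).2 hβ)).symm
  refine ⟨q, fun f => ?_⟩
  conv_rhs => rw [← support_sum_monomial_coeff f]
  simp only [dapply, hq, map_sum]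
  refine Finset.sum_congr rfl fun β _ => ?_
  have : monomial β (f.coeff β) = f.coeff β • monomial β 1 := by
    rw [smul_monomial, smul_eq_mul, mul_one]
  rw [this, map_smul, smul_eq_mul, mul_comm]

theorem exists_mem_dualSpace_dapply_ne_zero {I : Ideal (PolyR N)} {k : ℕ} {f : PolyR N}
    (hf : f ∉ I + mIdeal N ^ k) : ∃ q ∈ dualSpace I, dapply q f ≠ 0 := by
  obtain ⟨Φ, hΦf, hΦ⟩ := Submodule.exists_dual_map_eq_bot_of_notMem
    (p := (I + mIdeal N ^ k).restrictScalars ℂ) hf inferInstance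
  have hΦ' : ∀ g ∈ I + mIdeal N ^ k, Φ g = 0 := fun g hg =>
    LinearMap.le_ker_iff_map.2 hΦ hg
  obtain ⟨q, hq⟩ := exists_dapply_eq_of_vanishes_on_mpow Φ fun g hg =>
    hΦ' g (Submodule.mem_sup_right hg)
  exact ⟨q, fun g hg => (hq g).trans (hΦ' g (Submodule.mem_sup_left hg)), (hq f).trans_ne hΦf⟩

theorem mem_iff_forall_mem_dualSpace {I : Ideal (PolyR N)} (hI : contExt I = I)
    {f : PolyR N} : f ∈ I ↔ ∀ q ∈ dualSpace I, dapply q f = 0 := by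
  refine ⟨fun hf q hq => hq f hf, fun h => mem_of_forall_mem_add_mpow hI fun k => ?_⟩
  by_contra hf
  obtain ⟨q, hq, hqf⟩ := exists_mem_dualSpace_dapply_ne_zero hf
  exact hqf (h q hq)

theorem homogeneousComponent_mem_dualSpace {I : Ideal (PolyR N)}
    (hI : ∀ f ∈ I, ∀ d, homogeneousComponent d f ∈ I) {q : PolyR N} (hq : q ∈ dualSpace I)
    (d : ℕ) : homogeneousComponent d q ∈ dualSpace I := fun f hf => by
  rw [dapply_homogeneousComponent_left]
  exact hq _ (hI f hf d)

theorem homogeneousComponent_mem_of_dualSpace {I : Ideal (PolyR N)} (hI : contExt I = I)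
    (hD : ∀ q ∈ dualSpace I, ∀ d, homogeneousComponent d q ∈ dualSpace I) {f : PolyR N}
    (hf : f ∈ I) (d : ℕ) : homogeneousComponent d f ∈ I :=
  (mem_iff_forall_mem_dualSpace hI).2 fun q hq => by
    rw [← dapply_homogeneousComponent_left]
    exact hD q hq d f hf

theorem monomial_mem_dualSpace {I : Ideal (PolyR N)}
    (hI : ∀ f ∈ I, ∀ α ∈ f.support, monomial α 1 ∈ I) {q : PolyR N} (hq : q ∈ dualSpace I)
    {α : Fin N →₀ ℕ} (hα : α ∈ q.support) : monomial α 1 ∈ dualSpace I := fun f hf => by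
  rw [dapply_monomial_left, one_mul]
  by_contra hfα
  have := hq _ (hI f hf α (mem_support_iff.2 hfα))
  rw [dapply_monomial_right, mul_one] at this
  exact mem_support_iff.1 hα this

theorem monomial_mem_of_dualSpace {I : Ideal (PolyR N)} (hI : contExt I = I)
    (hD : ∀ q ∈ dualSpace I, ∀ α ∈ q.support, monomial α 1 ∈ dualSpace I) {f : PolyR N}
    (hf : f ∈ I) {α : Fin N →₀ ℕ} (hα : α ∈ f.support) : monomial α 1 ∈ I :=
  (mem_iff_forall_mem_dualSpace hI).2 fun q hq => by
    rw [dapply_monomial_right, mul_one]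
    by_contra hqα
    have := hD q hq α (mem_support_iff.2 hqα) f hf
    rw [dapply_monomial_left, one_mul] at this
    exact mem_support_iff.1 hα this

end Duality

theorem statement3_general {N : ℕ} (I : Ideal (PolyR N))
    (hI : contExt I = I) :
    ((∃ B : Set (PolyR N), B ⊆ (dualSpace I : Set (PolyR N)) ∧
        (∀ q ∈ B, ∃ k, MvPolynomial.IsHomogeneous q k) ∧
        Submodule.span ℂ B = dualSpace I) ↔
      (∃ G : Set (PolyR N), (∀ g ∈ G, ∃ k, MvPolynomial.IsHomogeneous g k) ∧
        Ideal.span G = I)) ∧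
    ((∃ A : Set (Fin N →₀ ℕ),
        Submodule.span ℂ ((fun α => (MvPolynomial.monomial α (1 : ℂ))) '' A)
          = dualSpace I) ↔
      (∃ G : Set (PolyR N), (∀ g ∈ G, ∃ α, g = MvPolynomial.monomial α (1 : ℂ)) ∧
        Ideal.span G = I)) := by
  rw [exists_isHomogeneous_submodule_span_eq_iff, exists_isHomogeneous_span_eq_iff,
    exists_monomial_submodule_span_eq_iff, exists_monomial_span_eq_iff]
  exact ⟨⟨fun hD f hf => homogeneousComponent_mem_of_dualSpace hI hD hf,
      fun hI' q hq => homogeneousComponent_mem_dualSpace hI' hq⟩,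
    ⟨fun hD f hf α => monomial_mem_of_dualSpace hI hD hf,
      fun hI' q hq α => monomial_mem_dualSpace hI' hq⟩⟩

/-- Let `I` be contracted from the local ring of the origin.  Then
(a) `D_0[I]` is spanned by homogeneous functionals iff `I` is generated by
homogeneous polynomials, and (b) `D_0[I]` is spanned by a set of monomial
functionals `∂^α` iff `I` is a monomial ideal. -/
theorem statement3 {N : ℕ} (hN : 1 ≤ N) (I : Ideal (PolyR N))
    (hI : contExt I = I) :
    ((∃ B : Set (PolyR N), B ⊆ (dualSpace I : Set (PolyR N)) ∧
        (∀ q ∈ B, ∃ k, MvPolynomial.IsHomogeneous q k) ∧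
        Submodule.span ℂ B = dualSpace I) ↔
      (∃ G : Set (PolyR N), (∀ g ∈ G, ∃ k, MvPolynomial.IsHomogeneous g k) ∧
        Ideal.span G = I)) ∧
    ((∃ A : Set (Fin N →₀ ℕ),
        Submodule.span ℂ ((fun α => (MvPolynomial.monomial α (1 : ℂ))) '' A)
          = dualSpace I) ↔
      (∃ G : Set (PolyR N), (∀ g ∈ G, ∃ α, g = MvPolynomial.monomial α (1 : ℂ)) ∧
        Ideal.span G = I)) :=
  statement3_general I hI
end
end

section
/- For every ideal I ⊆ R = ℂ[x_1,…,x_N], every subset A ⊆ {x_1,…,x_N} and every d ∈ ℕ, the eliminating truncated dual space satisfies E_0^d[I, A] = D_0[I + ⟨A⟩^{d+1}], where ⟨A⟩ ⊆ R is the ideal generated by the variables in A. -/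
open MvPolynomial

noncomputable section

/-!
The ideal `⟨A⟩^{d+1}` is the monomial ideal of all polynomials whose monomials have
`A`-degree at least `d + 1`. Since `D_0[I + K] = D_0[I] ∩ D_0[K]`, and the dual of a monomial
ideal consists of the functionals supported on the exponents outside it (test against each
monomial `x^α`), the dual of `I + ⟨A⟩^{d+1}` is `D_0[I]` cut down to `ord_A ≤ d`.
-/

namespace MvPolynomial

variable {σ R : Type*} [CommSemiring R] (s : Finset σ)

theorem monomial_mem_span_X_image_pow (m : σ →₀ ℕ) (r : R) :
    monomial m r ∈ Ideal.span (X '' (s : Set σ)) ^ (∑ i ∈ s, m i) := by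
  induction m using Finsupp.induction generalizing r with
  | zero => simp
  | single_add i k m _ _ ih =>
    classical
    rw [monomial_single_add]
    by_cases hi : i ∈ s
    · simp only [Finsupp.add_apply, Finset.sum_add_distrib, Finsupp.single_apply,
        Finset.sum_ite_eq, hi, if_true, pow_add]
      have hX : (X i : MvPolynomial σ R) ∈ Ideal.span (X '' (s : Set σ)) :=
        Ideal.subset_span ⟨i, hi, rfl⟩
      exact Ideal.mul_mem_mul (Ideal.pow_mem_pow hX k) (ih r)
    · have hzero : ∑ j ∈ s, (Finsupp.single i k) j = 0 :=
        Finset.sum_eq_zero fun j hj => Finsupp.single_eq_of_ne (ne_of_mem_of_not_mem hj hi)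
      simp only [Finsupp.add_apply, Finset.sum_add_distrib, hzero, zero_add]
      exact Ideal.mul_mem_left _ _ (ih r)

theorem le_sum_of_mem_support_of_mem_span_X_image_pow {n : ℕ} {p : MvPolynomial σ R}
    (hp : p ∈ Ideal.span (X '' (s : Set σ)) ^ n) {m : σ →₀ ℕ} (hm : m ∈ p.support) :
    n ≤ ∑ i ∈ s, m i := by
  classical
  induction n generalizing p m with
  | zero => exact Nat.zero_le _
  | succ n ih =>
    rw [pow_succ] at hp
    suffices ∀ m ∈ p.support, n + 1 ≤ ∑ i ∈ s, m i from this m hm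
    refine Submodule.mul_induction_on hp ?_ ?_
    · intro p hp q hq m hm
      obtain ⟨⟨a, b⟩, hab, hne⟩ := Finset.exists_ne_zero_of_sum_ne_zero
        (by rwa [mem_support_iff, coeff_mul] at hm)
      rw [Finset.HasAntidiagonal.mem_antidiagonal] at hab
      have ha : n ≤ ∑ i ∈ s, a i := ih hp (mem_support_iff.mpr (left_ne_zero_of_mul hne))
      obtain ⟨i, hi, hbi⟩ := (mem_ideal_span_X_image.mp hq) b
        (mem_support_iff.mpr (right_ne_zero_of_mul hne))
      have hb : 1 ≤ ∑ i ∈ s, b i :=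
        (Nat.one_le_iff_ne_zero.mpr hbi).trans (Finset.single_le_sum (fun _ _ => Nat.zero_le _) hi)
      simp only [← hab, Finsupp.add_apply, Finset.sum_add_distrib]
      omega
    · intro p q hp hq m hm
      rcases Finset.mem_union.mp (support_add hm) with h | h
      exacts [hp m h, hq m h]

theorem mem_span_X_image_pow_iff {n : ℕ} {p : MvPolynomial σ R} :
    p ∈ Ideal.span (X '' (s : Set σ)) ^ n ↔ ∀ m ∈ p.support, n ≤ ∑ i ∈ s, m i := by
  refine ⟨fun hp _ => le_sum_of_mem_support_of_mem_span_X_image_pow s hp, fun h => ?_⟩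
  rw [p.as_sum]
  exact Ideal.sum_mem _ fun m hm =>
    Ideal.pow_le_pow_right (h m hm) (monomial_mem_span_X_image_pow s m _)

end MvPolynomial

section DualSpace

variable {N : ℕ}

theorem dapply_eq_sum_support_left (q f : PolyR N) :
    dapply q f = ∑ α ∈ q.support, q.coeff α * f.coeff α := by
  classical
  have hq : ∀ α ∈ q.support ∪ f.support, α ∉ f.support → q.coeff α * f.coeff α = 0 :=
    fun α _ hα => by rw [notMem_support_iff.mp hα, mul_zero]
  have hf : ∀ α ∈ q.support ∪ f.support, α ∉ q.support → q.coeff α * f.coeff α = 0 :=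
    fun α _ hα => by rw [notMem_support_iff.mp hα, zero_mul]
  rw [dapply, Finset.sum_subset Finset.subset_union_right hq,
    Finset.sum_subset Finset.subset_union_left hf]

theorem dapply_add_right (q f g : PolyR N) : dapply q (f + g) = dapply q f + dapply q g := by
  simp only [dapply_eq_sum_support_left, coeff_add, mul_add, Finset.sum_add_distrib]

theorem dapply_monomial_one (q : PolyR N) (α : Fin N →₀ ℕ) :
    dapply q (monomial α 1) = q.coeff α := by
  simp [dapply, support_monomial]

theorem dualSpace_sup (I K : Ideal (PolyR N)) :
    dualSpace (I ⊔ K) = dualSpace I ⊓ dualSpace K := by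
  ext q
  refine ⟨fun hq => ⟨fun f hf => hq f (Ideal.mem_sup_left hf),
    fun f hf => hq f (Ideal.mem_sup_right hf)⟩, fun ⟨hI, hK⟩ f hf => ?_⟩
  obtain ⟨g, hg, h, hh, rfl⟩ := Submodule.mem_sup.mp hf
  rw [dapply_add_right, hI g hg, hK h hh, add_zero]

theorem dualSpace_eq_expSupported {K : Ideal (PolyR N)} {P : (Fin N →₀ ℕ) → Prop}
    (hK : ∀ f, f ∈ K ↔ ∀ α ∈ f.support, P α) :
    dualSpace K = expSupported (fun α => ¬ P α) := by
  ext q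
  refine ⟨fun hq α hα hP => ?_, fun hq f hf => Finset.sum_eq_zero fun α hα => ?_⟩
  · have hmono : monomial α 1 ∈ K := (hK _).mpr fun β hβ => by
      rwa [(Finset.mem_singleton.mp (support_monomial_subset hβ))]
    exact mem_support_iff.mp hα (dapply_monomial_one q α ▸ hq _ hmono)
  · have hqα : α ∉ q.support := fun h => hq α h ((hK f).mp hf α hα)
    rw [notMem_support_iff.mp hqα, zero_mul]

end DualSpace

theorem statement14_general {N : ℕ} (I : Ideal (PolyR N))
    (A : Finset (Fin N)) (d : ℕ) :
    elimDual I A d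
      = dualSpace (I + (Ideal.span ((fun i => (MvPolynomial.X i : PolyR N)) ''
          (A : Set (Fin N)))) ^ (d + 1)) := by
  rw [Submodule.add_eq_sup, dualSpace_sup,
    dualSpace_eq_expSupported fun _ => mem_span_X_image_pow_iff A]
  simp only [elimDual, not_le, Nat.lt_add_one_iff]

/-- For every ideal `I ⊆ R`, subset `A` of the variables and `d ∈ ℕ`,
`E_0^d[I, A] = D_0[I + ⟨A⟩^{d+1}]`. -/
theorem statement14 {N : ℕ} (hN : 1 ≤ N) (I : Ideal (PolyR N))
    (A : Finset (Fin N)) (d : ℕ) :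
    elimDual I A d
      = dualSpace (I + (Ideal.span ((fun i => (MvPolynomial.X i : PolyR N)) ''
          (A : Set (Fin N)))) ^ (d + 1)) :=
  statement14_general I A d
end
end
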